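/- arXiv:2512.16932 — 2 statements merged into one kernel-verified Lean document; each statement's English description precedes it below -/
import Mathlib

section
/- Let α ∈ [0,1), and let G be a connected simple graph of even order n with minimum degree δ ≥ 2, where n ≥ 7δ−7 if α ∈ [0,1/2], n ≥ 8δ−8 if α ∈ (1/2,2/3], and n ≥ (3δ−3)/(1−α) if α ∈ (2/3,1). If ρ_α(G) ≥ ρ_α(K_δ ∨ (K_{n−2δ+1} ∪ (δ−1)K_1)), then G contains an even factor, unless G is isomorphic to K_δ ∨ (K_{n−2δ+1} ∪ (δ−1)K_1). -/
open Matrix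

/-- The cell (clique index) of a vertex of the join-of-cliques graph:
`none` for vertices of the central `K_s`, `some i` for vertices of `K_{parts i}`. -/
def cellOf {s t : ℕ} {parts : Fin t → ℕ} :
    (Fin s ⊕ (Σ i : Fin t, Fin (parts i))) → Option (Fin t)
  | Sum.inl _ => none
  | Sum.inr ⟨i, _⟩ => some i

/-- The graph `K_s ∨ (K_{parts 0} ∪ K_{parts 1} ∪ ⋯ ∪ K_{parts (t-1)})`. -/
def cliqueJoin (s : ℕ) {t : ℕ} (parts : Fin t → ℕ) :
    SimpleGraph (Fin s ⊕ (Σ i : Fin t, Fin (parts i))) where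
  Adj x y := x ≠ y ∧ (cellOf x = none ∨ cellOf y = none ∨ cellOf x = cellOf y)
  symm := ⟨by rintro x y ⟨h1, h2⟩; exact ⟨h1.symm, by tauto⟩⟩
  loopless := ⟨by rintro x ⟨h1, -⟩; exact h1 rfl⟩

/-- The `A_α`-matrix `A_α(G) = α D(G) + (1-α) A(G)`. -/
noncomputable def Aalpha {V : Type*} [Fintype V] (α : ℝ) (G : SimpleGraph V) :
    Matrix V V ℝ :=
  letI := Classical.decEq V
  letI := Classical.decRel G.Adj
  α • Matrix.diagonal (fun v => (G.degree v : ℝ)) + (1 - α) • (G.adjMatrix ℝ)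

/-- The largest real eigenvalue of a real matrix (for a real symmetric matrix,
this is its largest eigenvalue). -/
noncomputable def specRad {V : Type*} [Fintype V] (M : Matrix V V ℝ) : ℝ :=
  letI := Classical.decEq V
  sSup (spectrum ℝ M)

/-- The `A_α`-spectral radius of a graph. -/
noncomputable def rhoAlpha {V : Type*} [Fintype V] (α : ℝ) (G : SimpleGraph V) : ℝ :=
  specRad (Aalpha α G)

/-- `G` has an even factor: a spanning subgraph in which every vertex has positive
even degree. -/
def HasEvenFactor {V : Type*} [Fintype V] (G : SimpleGraph V) : Prop :=
  ∃ H : SimpleGraph V, H ≤ G ∧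
    ∀ v : V, 0 < (H.neighborSet v).ncard ∧ Even ((H.neighborSet v).ncard)

/-!
The test vector `1_C + t e_u`, with `C = K_δ ∪ K_{n-2δ+1}` a clique and `u` a vertex of some
`K_1`, shows that the extremal graph has `ρ_α > n - δ`, while Gershgorin gives `ρ_α(G) ≤ Δ(G)`.
Hence some vertex `v` has degree at least `n - δ + 1`, so at most `δ - 2` vertices are outside
the closed neighbourhood of `v`. Every neighbour of `v` then has a neighbour in `N(v)`, and every
vertex outside the closed neighbourhood has two. These edges form a spanning subgraph of `G - v` with no isolated vertex
whose odd vertices all lie in `N(v)`; joining them to `v` (after deleting one edge inside `N(v)`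
if there are none) gives an even factor.
-/

namespace Matrix

variable {n : Type*} [Fintype n] {M : Matrix n n ℝ}

theorem dotProduct_mulVec_le_of_spectrum_le [DecidableEq n] (hM : M.IsHermitian) {c : ℝ}
    (hc : ∀ μ ∈ spectrum ℝ M, μ ≤ c) (x : n → ℝ) : x ⬝ᵥ M *ᵥ x ≤ c * (x ⬝ᵥ x) := by
  have hpos : (algebraMap ℝ (Matrix n n ℝ) c - M).PosSemidef := by
    refine posSemidef_iff_isHermitian_and_spectrum_nonneg.2 ⟨?_, ?_⟩
    · simpa [Matrix.algebraMap_eq_diagonal] using (isHermitian_diagonal _).sub hM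
    · rintro μ hμ
      rw [← spectrum.singleton_sub_eq] at hμ
      obtain ⟨c', rfl, μ', hμ', rfl⟩ := hμ
      simpa using hc μ' hμ'
  have := hpos.dotProduct_mulVec_nonneg x
  rw [Algebra.algebraMap_eq_smul_one, sub_mulVec, smul_mulVec, one_mulVec, dotProduct_sub,
    dotProduct_smul, star_trivial, smul_eq_mul] at this
  linarith

theorem lt_specRad_of_lt_dotProduct_mulVec (hM : M.IsHermitian) {c : ℝ} (x : n → ℝ)
    (h : c * (x ⬝ᵥ x) < x ⬝ᵥ M *ᵥ x) : c < specRad M := by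
  classical
  by_contra! hle
  have hbdd : BddAbove (spectrum ℝ M) := finite_real_spectrum.bddAbove
  exact h.not_ge (dotProduct_mulVec_le_of_spectrum_le hM
    (fun μ hμ => (le_csSup hbdd hμ).trans hle) x)

theorem specRad_le_of_nonneg_of_sum_le (hM : ∀ i j, 0 ≤ M i j) {r : ℝ} (hr : 0 ≤ r)
    (h : ∀ i, ∑ j, M i j ≤ r) : specRad M ≤ r := by
  classical
  refine Real.sSup_le (fun μ hμ => ?_) hr
  rw [← spectrum_toLin', ← Module.End.hasEigenvalue_iff_mem_spectrum] at hμ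
  obtain ⟨k, hk⟩ := eigenvalue_mem_ball hμ
  rw [Metric.mem_closedBall, Real.dist_eq] at hk
  calc μ ≤ M k k + ∑ j ∈ Finset.univ.erase k, ‖M k j‖ := by linarith [le_abs_self (μ - M k k)]
    _ = ∑ j, M k j := by
      rw [← Finset.add_sum_erase _ _ (Finset.mem_univ k)]
      simp only [Real.norm_of_nonneg (hM k _)]
    _ ≤ r := h k

theorem lt_specRad_of_le_sum_of_pos_sum (hM : M.IsHermitian) (hnn : ∀ i j, 0 ≤ M i j)
    {C : Finset n} {r : ℝ} (hC : ∀ i ∈ C, r ≤ ∑ j ∈ C, M i j) {u : n} (hu : u ∉ C)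
    (hpos : 0 < ∑ j ∈ C, M u j) : r < specRad M := by
  classical
  -- Test vector `1_C + t e_u`: the bump at `u` gains `t ε` in the quadratic form but costs only
  -- `r t²` against the norm, and `r t < ε` for small `t`.
  set ε := ∑ j ∈ C, M u j
  set t := ε / (|r| + 1) with ht
  have ht0 : 0 < t := by positivity
  have hrt : r * t < ε := by
    calc r * t ≤ |r| * t := by gcongr; exact le_abs_self r
      _ < (|r| + 1) * t := by linarith
      _ = ε := by rw [ht]; field_simp
  set a : n → ℝ := fun j => if j ∈ C then 1 else 0
  have hdot : ∀ w : n → ℝ, a ⬝ᵥ w = ∑ j ∈ C, w j := fun w => by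
    simp [a, dotProduct, ite_mul, Finset.sum_ite_mem]
  have hmul : ∀ i, (M *ᵥ a) i = ∑ j ∈ C, M i j := fun i => by
    simp [a, mulVec, dotProduct, mul_ite, Finset.sum_ite_mem]
  have hnorm : (a + t • Pi.single u 1) ⬝ᵥ (a + t • Pi.single u 1) = C.card + t * t := by
    simp [add_dotProduct, dotProduct_add, hdot, dotProduct_single, single_dotProduct, a, hu]
  have hquad : (C.card * r) + t * ε ≤
      (a + t • Pi.single u 1) ⬝ᵥ M *ᵥ (a + t • Pi.single u 1) := by
    have hCa : C.card * r ≤ a ⬝ᵥ M *ᵥ a := by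
      rw [hdot]
      simpa [hmul] using Finset.card_nsmul_le_sum C _ r hC
    have hua : 0 ≤ a ⬝ᵥ M *ᵥ Pi.single u 1 := by
      rw [hdot]; exact Finset.sum_nonneg fun i _ => by simpa [mulVec_single] using hnn i u
    have huu : 0 ≤ (M *ᵥ Pi.single u 1) u := by simpa [mulVec_single] using hnn u u
    simp only [mulVec_add, mulVec_smul, add_dotProduct, dotProduct_add, smul_dotProduct,
      dotProduct_smul, smul_eq_mul, single_dotProduct, one_mul, hmul]
    linarith [mul_nonneg ht0.le (add_nonneg hua (mul_nonneg ht0.le huu))]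
  refine lt_specRad_of_lt_dotProduct_mulVec hM (a + t • Pi.single u 1) ?_
  rw [hnorm]
  linarith [mul_lt_mul_of_pos_right hrt ht0]

end Matrix

namespace SimpleGraph


variable {V : Type*} [Fintype V] {α : ℝ} (G : SimpleGraph V)

theorem Aalpha_eq [DecidableEq V] [DecidableRel G.Adj] :
    Aalpha α G = α • diagonal (fun v => (G.degree v : ℝ)) + (1 - α) • G.adjMatrix ℝ := by
  unfold Aalpha
  convert rfl

theorem isHermitian_Aalpha : (Aalpha α G).IsHermitian := by
  classical
  rw [Aalpha_eq, isHermitian_iff_isSymm]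
  exact ((isSymm_diagonal _).smul α).add ((G.isSymm_adjMatrix).smul (1 - α))

theorem Aalpha_nonneg (hα0 : 0 ≤ α) (hα1 : α ≤ 1) (i j : V) : 0 ≤ Aalpha α G i j := by
  classical
  rw [Aalpha_eq]
  simp only [Matrix.add_apply, Matrix.smul_apply, smul_eq_mul, diagonal_apply, adjMatrix_apply]
  have : 0 ≤ 1 - α := by linarith
  positivity

theorem sum_Aalpha_apply [DecidableRel G.Adj] (i : V) : ∑ j, Aalpha α G i j = G.degree i := by
  classical
  simp only [Aalpha_eq, Matrix.add_apply, Matrix.smul_apply, smul_eq_mul, diagonal_apply,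
    adjMatrix_apply, Finset.sum_add_distrib, ← Finset.mul_sum, Finset.sum_ite_eq,
    Finset.mem_univ, if_true, Finset.sum_boole, ← neighborFinset_eq_filter,
    card_neighborFinset_eq_degree]
  ring

theorem Aalpha_apply_self [DecidableRel G.Adj] (i : V) : Aalpha α G i i = α * G.degree i := by
  classical
  simp [Aalpha_eq]

theorem Aalpha_apply_of_adj {i j : V} (h : G.Adj i j) : Aalpha α G i j = 1 - α := by
  classical
  simp [Aalpha_eq, h.ne, h]

theorem rhoAlpha_le_maxDegree [DecidableRel G.Adj] (hα0 : 0 ≤ α) (hα1 : α ≤ 1) :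
    rhoAlpha α G ≤ G.maxDegree :=
  specRad_le_of_nonneg_of_sum_le (Aalpha_nonneg G hα0 hα1) (Nat.cast_nonneg _) fun i =>
    (sum_Aalpha_apply G i).trans_le (mod_cast G.degree_le_maxDegree i)

variable {G}

theorem IsClique.card_sub_one_le_degree [DecidableRel G.Adj] [DecidableEq V] {C : Finset V}
    (hC : G.IsClique C) {i : V} (hi : i ∈ C) : C.card - 1 ≤ G.degree i := by
  rw [← Finset.card_erase_of_mem hi, ← card_neighborFinset_eq_degree]
  exact Finset.card_le_card fun j hj => (mem_neighborFinset _ _ _).2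
    (hC hi (Finset.mem_of_mem_erase hj) (Finset.ne_of_mem_erase hj).symm)

theorem IsClique.sub_one_lt_rhoAlpha (hα0 : 0 ≤ α) (hα1 : α < 1) {C : Finset V}
    (hC : G.IsClique C) {u w : V} (hu : u ∉ C) (hw : w ∈ C) (huw : G.Adj u w) :
    (C.card : ℝ) - 1 < rhoAlpha α G := by
  classical
  refine lt_specRad_of_le_sum_of_pos_sum G.isHermitian_Aalpha (Aalpha_nonneg G hα0 hα1.le)
    (fun i hi => ?_) hu ?_
  · have hC1 : 1 ≤ C.card := Finset.card_pos.2 ⟨i, hi⟩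
    have hdeg : ((C.card - 1 : ℕ) : ℝ) ≤ G.degree i := mod_cast hC.card_sub_one_le_degree hi
    rw [← Finset.add_sum_erase C _ hi, Aalpha_apply_self,
      Finset.sum_congr rfl fun j hj => Aalpha_apply_of_adj G
        (hC hi (Finset.mem_of_mem_erase hj) (Finset.ne_of_mem_erase hj).symm),
      Finset.sum_const, Finset.card_erase_of_mem hi, nsmul_eq_mul]
    push_cast [Nat.cast_sub hC1] at hdeg ⊢
    nlinarith
  · calc (0 : ℝ) < Aalpha α G u w := by rw [Aalpha_apply_of_adj G huw]; linarith
      _ ≤ ∑ j ∈ C, Aalpha α G u j :=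
        Finset.single_le_sum (fun j _ => Aalpha_nonneg G hα0 hα1.le u j) hw



theorem ncard_neighborSet_eq_degree (G : SimpleGraph V) [DecidableRel G.Adj] (x : V) :
    (G.neighborSet x).ncard = G.degree x := by
  rw [← Nat.card_coe_set_eq, Nat.card_eq_fintype_card, card_neighborSet_eq_degree]

theorem even_ncard_setOf_odd_ncard_neighborSet (G : SimpleGraph V) :
    Even {x | Odd (G.neighborSet x).ncard}.ncard := by
  classical
  convert G.even_card_odd_degree_vertices using 1
  rw [Set.ncard_eq_toFinset_card']
  congr 1
  ext x
  simp [ncard_neighborSet_eq_degree]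

section EvenFactor

variable {F G : SimpleGraph V} {v : V}

theorem hasEvenFactor_of_odd_adj_of_exists_odd (hFG : F ≤ G) (hv : ∀ y, ¬F.Adj v y)
    (hpos : ∀ x ≠ v, (F.neighborSet x).Nonempty)
    (hodd : ∀ x, Odd (F.neighborSet x).ncard → G.Adj v x)
    (hT : ∃ x, Odd (F.neighborSet x).ncard) : HasEvenFactor G := by
  set T := {x | Odd (F.neighborSet x).ncard}
  have hvT : v ∉ T := by
    simp [T, Set.eq_empty_of_forall_notMem (s := F.neighborSet v) hv]
  set H := F ⊔ fromRel fun x y => x = v ∧ y ∈ T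
  refine ⟨H, sup_le hFG ?_, fun x => ?_⟩
  · rintro x y ⟨-, ⟨rfl, hy⟩ | ⟨rfl, hx⟩⟩
    exacts [hodd y hy, (hodd x hx).symm]
  by_cases hxv : x = v
  · have hN : H.neighborSet x = T := by
      ext y
      simp only [H, hxv, mem_neighborSet, sup_adj, fromRel_adj, true_and]
      constructor
      · rintro (h | ⟨-, h | ⟨rfl, h⟩⟩)
        exacts [(hv y h).elim, h, (hvT h).elim]
      · exact fun h => Or.inr ⟨fun e => hvT (e ▸ h), Or.inl h⟩
    rw [hN]
    exact ⟨(show T.Nonempty from hT).ncard_pos, F.even_ncard_setOf_odd_ncard_neighborSet⟩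
  by_cases hxT : x ∈ T
  · have hN : H.neighborSet x = insert v (F.neighborSet x) := by
      ext y
      simp only [H, hxv, mem_neighborSet, sup_adj, fromRel_adj, false_and, false_or,
        Set.mem_insert_iff]
      constructor
      · rintro (h | ⟨-, rfl, -⟩)
        exacts [Or.inr h, Or.inl rfl]
      · rintro (rfl | h)
        exacts [Or.inr ⟨hxv, rfl, hxT⟩, Or.inl h]
    rw [hN, Set.ncard_insert_of_notMem fun h => hv x h.symm]
    exact ⟨Nat.succ_pos _, hxT.add_one⟩
  · have hN : H.neighborSet x = F.neighborSet x := by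
      ext y
      simp only [H, hxv, hxT, mem_neighborSet, sup_adj, fromRel_adj, false_and, and_false,
        or_false]
    rw [hN]
    exact ⟨(hpos x hxv).ncard_pos, Nat.not_odd_iff_even.1 hxT⟩

theorem hasEvenFactor_of_odd_adj (hFG : F ≤ G) (hv : ∀ y, ¬F.Adj v y)
    (hpos : ∀ x ≠ v, (F.neighborSet x).Nonempty)
    (hodd : ∀ x, Odd (F.neighborSet x).ncard → G.Adj v x)
    {a b : V} (hab : F.Adj a b) (ha : G.Adj v a) (hb : G.Adj v b) : HasEvenFactor G := by
  by_cases hT : ∃ x, Odd (F.neighborSet x).ncard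
  · exact hasEvenFactor_of_odd_adj_of_exists_odd hFG hv hpos hodd hT
  simp only [not_exists, Nat.not_odd_iff_even] at hT
  -- Deleting the edge `ab` makes exactly `a` and `b` odd.
  set F' := F.deleteEdges {s(a, b)}
  have hfar : ∀ x, ¬(x = a ∨ x = b) → F'.neighborSet x = F.neighborSet x := fun x hx => by
    obtain ⟨hxa, hxb⟩ := not_or.1 hx
    ext y
    simp [F', hxa, hxb]
  have hend : ∀ p q, F.Adj p q → s(p, q) = s(a, b) →
      (F'.neighborSet p).ncard + 1 = (F.neighborSet p).ncard := fun p q hpq he => by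
    have : F'.neighborSet p = F.neighborSet p \ {q} := by
      ext y
      simp only [F', ← he, mem_neighborSet, deleteEdges_adj, Set.mem_singleton_iff,
        Set.mem_sdiff]
      exact and_congr_right fun h => (Sym2.congr_right).not
    rw [this, Set.ncard_sdiff_singleton_add_one (show q ∈ F.neighborSet p from hpq)]
  have hend_odd : ∀ x, x = a ∨ x = b → Odd (F'.neighborSet x).ncard := by
    have odd_of_succ {x : V} (h : (F'.neighborSet x).ncard + 1 = (F.neighborSet x).ncard) :
        Odd (F'.neighborSet x).ncard := by
      rw [← Nat.not_even_iff_odd, ← Nat.even_add_one, h]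
      exact hT x
    rintro x (rfl | rfl)
    exacts [odd_of_succ (hend x b hab rfl), odd_of_succ (hend x a hab.symm Sym2.eq_swap)]
  refine hasEvenFactor_of_odd_adj_of_exists_odd ((deleteEdges_le _).trans hFG)
    (fun y h => hv y h.1) (fun x hxv => ?_) (fun x hx => ?_) ⟨a, hend_odd a (Or.inl rfl)⟩
  · by_cases hx : x = a ∨ x = b
    · exact Set.nonempty_of_ncard_ne_zero (hend_odd x hx).pos.ne'
    · rw [hfar x hx]
      exact hpos x hxv
  · by_cases hx' : x = a ∨ x = b
    · rcases hx' with rfl | rfl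
      exacts [ha, hb]
    · rw [hfar x hx'] at hx
      exact absurd hx (Nat.not_odd_iff_even.2 (hT x))

end EvenFactor

theorem hasEvenFactor_of_forall_adj (G : SimpleGraph V) {v a₀ : V} (ha₀ : G.Adj v a₀)
    (hN : ∀ a, G.Adj v a → ∃ b, G.Adj v b ∧ G.Adj a b)
    (hW : ∀ w ≠ v, ¬G.Adj v w → ∃ b c, b ≠ c ∧ G.Adj v b ∧ G.Adj v c ∧ G.Adj w b ∧ G.Adj w c) :
    HasEvenFactor G := by
  choose! b c hbc hvb hvc hwb hwc using hW
  set F := G ⊓ fromRel fun x y =>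
    (G.Adj v x ∧ G.Adj v y) ∨ (x ≠ v ∧ ¬G.Adj v x ∧ (y = b x ∨ y = c x))
  have hFv : ∀ y, ¬F.Adj v y := by
    rintro y ⟨-, -, (⟨hvv, -⟩ | ⟨hvv, -⟩) | (⟨-, hvv⟩ | ⟨hy, hvy, h | h⟩)⟩
    exacts [G.irrefl hvv, hvv rfl, G.irrefl hvv, G.irrefl (h ▸ hvb y hy hvy),
      G.irrefl (h ▸ hvc y hy hvy)]
  have hFW : ∀ w ≠ v, ¬G.Adj v w → F.neighborSet w = {b w, c w} := by
    intro w hwv hvw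
    ext y
    simp only [F, mem_neighborSet, inf_adj, fromRel_adj, Set.mem_insert_iff,
      Set.mem_singleton_iff]
    constructor
    · rintro ⟨-, -, (⟨h, -⟩ | ⟨-, -, h⟩) | (⟨-, h⟩ | ⟨hy, hvy, h | h⟩)⟩
      exacts [absurd h hvw, h, absurd h hvw, absurd (h ▸ hvb y hy hvy) hvw,
        absurd (h ▸ hvc y hy hvy) hvw]
    · rintro (rfl | rfl)
      · exact ⟨hwb w hwv hvw, (hwb w hwv hvw).ne, Or.inl (Or.inr ⟨hwv, hvw, Or.inl rfl⟩)⟩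
      · exact ⟨hwc w hwv hvw, (hwc w hwv hvw).ne, Or.inl (Or.inr ⟨hwv, hvw, Or.inr rfl⟩)⟩
  obtain ⟨b₀, hvb₀, hab₀⟩ := hN a₀ ha₀
  have hFN : ∀ a b, G.Adj v a → G.Adj v b → G.Adj a b → F.Adj a b := fun a b ha hb hab =>
    ⟨hab, hab.ne, Or.inl (Or.inl ⟨ha, hb⟩)⟩
  refine hasEvenFactor_of_odd_adj inf_le_left hFv (fun x hxv => ?_) (fun x hx => ?_)
    (hFN a₀ b₀ ha₀ hvb₀ hab₀) ha₀ hvb₀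
  · by_cases hvx : G.Adj v x
    · obtain ⟨y, hvy, hxy⟩ := hN x hvx
      exact ⟨y, hFN x y hvx hvy hxy⟩
    · rw [hFW x hxv hvx]
      exact Set.insert_nonempty _ _
  · by_contra hvx
    have hxv : x ≠ v := by
      rintro rfl
      rw [show F.neighborSet x = ∅ from Set.eq_empty_of_forall_notMem hFv] at hx
      exact absurd hx (by simp)
    rw [hFW x hxv hvx, Set.ncard_pair (hbc x hxv hvx)] at hx
    exact absurd hx (by decide)

theorem hasEvenFactor_of_card_lt_maxDegree_add_minDegree (G : SimpleGraph V)
    [DecidableRel G.Adj] (hδ : 2 ≤ G.minDegree) (h : Fintype.card V < G.maxDegree + G.minDegree) :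
    HasEvenFactor G := by
  classical
  cases isEmpty_or_nonempty V
  · simp [minDegree_of_subsingleton] at hδ
  obtain ⟨v, hv⟩ := G.exists_maximal_degree_vertex
  have hdeg : ∀ x, G.minDegree ≤ G.degree x := G.minDegree_le_degree
  set W := (insert v (G.neighborFinset v))ᶜ
  have hout : ∀ y ∉ W, y = v ∨ G.Adj v y := by simp [W, or_iff_not_imp_left]
  have hW : W.card + 2 ≤ G.minDegree := by
    rw [Finset.card_compl, Finset.card_insert_of_notMem (G.notMem_neighborFinset_self v),
      card_neighborFinset_eq_degree]
    omega
  obtain ⟨a₀, ha₀⟩ := Finset.card_pos.1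
    (show 0 < (G.neighborFinset v).card by grind [card_neighborFinset_eq_degree])
  refine G.hasEvenFactor_of_forall_adj ((G.mem_neighborFinset v a₀).1 ha₀) (fun a hva => ?_)
    (fun w hwv hvw => ?_)
  · obtain ⟨b, hab, hb⟩ := Finset.exists_mem_notMem_of_card_lt_card (s := insert v W)
      (t := G.neighborFinset a) (by grind [Finset.card_insert_le, card_neighborFinset_eq_degree])
    rw [Finset.mem_insert, not_or] at hb
    exact ⟨b, (hout b hb.2).resolve_left hb.1, (G.mem_neighborFinset a b).1 hab⟩
  · have hout' : ∀ y ∈ G.neighborFinset w \ W, G.Adj v y ∧ G.Adj w y := fun y hy => by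
      rw [Finset.mem_sdiff, mem_neighborFinset] at hy
      refine ⟨(hout y hy.2).resolve_left ?_, hy.1⟩
      rintro rfl
      exact hvw hy.1.symm
    obtain ⟨b, hb, c, hc, hbc⟩ := Finset.one_lt_card.1
      (by grind [Finset.le_card_sdiff W (G.neighborFinset w), card_neighborFinset_eq_degree] :
        1 < (G.neighborFinset w \ W).card)
    exact ⟨b, c, hbc, (hout' b hb).1, (hout' c hc).1, (hout' b hb).2, (hout' c hc).2⟩

end SimpleGraph

section cliqueJoin

variable {α : ℝ} {s t : ℕ} {parts : Fin t → ℕ}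

theorem sub_one_lt_rhoAlpha_cliqueJoin (hα0 : 0 ≤ α) (hα1 : α < 1) (hs : 0 < s) {i₀ i₁ : Fin t}
    (hi : i₀ ≠ i₁) (hpart : 0 < parts i₁) :
    (s + parts i₀ : ℝ) - 1 < rhoAlpha α (cliqueJoin s parts) := by
  set C : Finset (Fin s ⊕ (Σ i : Fin t, Fin (parts i))) :=
    Finset.univ.disjSum (Finset.univ.map (Function.Embedding.sigmaMk i₀))
  have hcell : ∀ x ∈ C, cellOf x = none ∨ cellOf x = some i₀ := by
    simp only [C, Finset.mem_disjSum]
    rintro x (⟨a, -, rfl⟩ | ⟨b, hb, rfl⟩)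
    · exact Or.inl rfl
    · obtain ⟨j, -, rfl⟩ := Finset.mem_map.1 hb
      exact Or.inr rfl
  have hC : (cliqueJoin s parts).IsClique (C : Set _) := fun x hx y hy hxy => by
    refine ⟨hxy, ?_⟩
    rcases hcell x hx with h | h <;> rcases hcell y hy with h' | h' <;> simp [h, h']
  have hcard : C.card = s + parts i₀ := by simp [C]
  simpa [hcard] using hC.sub_one_lt_rhoAlpha hα0 hα1 (u := Sum.inr ⟨i₁, ⟨0, hpart⟩⟩)
    (w := Sum.inl ⟨0, hs⟩) (by simp [C, hi]) (by simp [C]) ⟨by simp, Or.inr (Or.inl rfl)⟩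

end cliqueJoin

theorem evenFactor_of_AalphaSpectralRadius_general
    {V : Type*} [Fintype V] (α : ℝ) (hα0 : 0 ≤ α) (hα1 : α < 1)
    (G : SimpleGraph V) [DecidableRel G.Adj]
    (n δ : ℕ) (hcard : Fintype.card V = n)
    (hmin : G.minDegree = δ) (hδ : 2 ≤ δ)
    (hρ : rhoAlpha α (cliqueJoin δ (fun i : Fin δ => if (i : ℕ) = 0 then n - 2 * δ + 1 else 1)) ≤ rhoAlpha α G) :
    HasEvenFactor G ∨ Nonempty (G ≃g cliqueJoin δ (fun i : Fin δ => if (i : ℕ) = 0 then n - 2 * δ + 1 else 1)) := by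
  left
  have hext := sub_one_lt_rhoAlpha_cliqueJoin (s := δ)
    (parts := fun i : Fin δ => if (i : ℕ) = 0 then n - 2 * δ + 1 else 1) hα0 hα1 (by omega)
    (i₀ := ⟨0, by omega⟩) (i₁ := ⟨1, by omega⟩) (by simp) (by simp)
  simp only [↓reduceIte] at hext
  have hsize : (n : ℝ) + 1 ≤ δ + ((n - 2 * δ + 1 : ℕ) : ℝ) + δ := mod_cast (by omega)
  have hmax : (n : ℝ) - δ < G.maxDegree := calc
    (n : ℝ) - δ ≤ δ + ((n - 2 * δ + 1 : ℕ) : ℝ) - 1 := by linarith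
    _ < rhoAlpha α (cliqueJoin δ _) := hext
    _ ≤ rhoAlpha α G := hρ
    _ ≤ G.maxDegree := G.rhoAlpha_le_maxDegree hα0 hα1.le
  refine G.hasEvenFactor_of_card_lt_maxDegree_add_minDegree (hmin ▸ hδ) ?_
  rw [hcard, hmin]
  exact_mod_cast (by linarith : (n : ℝ) < G.maxDegree + δ)

theorem evenFactor_of_AalphaSpectralRadius
    {V : Type*} [Fintype V] (α : ℝ) (hα0 : 0 ≤ α) (hα1 : α < 1)
    (G : SimpleGraph V) [DecidableRel G.Adj] (hconn : G.Connected)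
    (n δ : ℕ) (hcard : Fintype.card V = n) (heven : Even n)
    (hmin : G.minDegree = δ) (hδ : 2 ≤ δ)
    (hn1 : α ≤ 1 / 2 → 7 * δ - 7 ≤ n)
    (hn2 : 1 / 2 < α → α ≤ 2 / 3 → 8 * δ - 8 ≤ n)
    (hn3 : 2 / 3 < α → (3 * (δ : ℝ) - 3) / (1 - α) ≤ (n : ℝ))
    (hρ : rhoAlpha α (cliqueJoin δ (fun i : Fin δ => if (i : ℕ) = 0 then n - 2 * δ + 1 else 1)) ≤ rhoAlpha α G) :
    HasEvenFactor G ∨ Nonempty (G ≃g cliqueJoin δ (fun i : Fin δ => if (i : ℕ) = 0 then n - 2 * δ + 1 else 1)) :=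
  evenFactor_of_AalphaSpectralRadius_general α hα0 hα1 G n δ hcard hmin hδ hρ
end

section
/- Let α ∈ [0,1) and let δ, n be positive integers with δ ≥ 2 and n ≥ 2δ. Then ρ_α(K_δ ∨ (K_{n−2δ+1} ∪ (δ−1)K_1)) > n − δ. -/
open Matrix

/-!
Bound `ρ_α` from below by a Rayleigh quotient: if `c · (x ⬝ᵥ x) < x ⬝ᵥ A_α x` then `c·1 - A_α`
is not positive semidefinite, so `A_α` has an eigenvalue above `c`. Take `x` equal to `1` on
`K_δ ∨ K_{n-2δ+1}` and to `ε` on the `δ - 1` vertices of `(δ - 1) K_1`, where `(n - δ) ε = δ (1 - α)`.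
As `x` is constant on the cells of the equitable partition of the graph, `x ⬝ᵥ A_α x` is computed
with the quotient matrix, and `x ⬝ᵥ A_α x - (n - δ) (x ⬝ᵥ x) = δ (δ - 1) (α + (1 - α) ε + α ε²) > 0`.
-/

lemma lt_specRad_of_mul_dotProduct_lt {V : Type*} [Fintype V] {M : Matrix V V ℝ}
    (hM : M.IsHermitian) {c : ℝ} {x : V → ℝ} (h : c * (x ⬝ᵥ x) < x ⬝ᵥ M *ᵥ x) :
    c < specRad M := by
  classical
  by_contra! hle
  have hpsd : (algebraMap ℝ (Matrix V V ℝ) c - M).PosSemidef := by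
    refine posSemidef_iff_isHermitian_and_spectrum_nonneg.mpr
      ⟨(IsSelfAdjoint.algebraMap _ (.all c)).sub hM, ?_⟩
    rw [← spectrum.singleton_sub_eq]
    rintro _ ⟨_, rfl, μ, hμ, rfl⟩
    have : μ ≤ specRad M := le_csSup (Matrix.finite_spectrum M).bddAbove hμ
    exact sub_nonneg.mpr (this.trans hle)
  have := hpsd.dotProduct_mulVec_nonneg x
  simp only [star_trivial, Algebra.algebraMap_eq_smul_one, sub_mulVec, smul_mulVec, one_mulVec,
    dotProduct_sub, dotProduct_smul, smul_eq_mul, sub_nonneg] at this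
  linarith

section Aalpha
variable {V : Type*} [Fintype V]

lemma Aalpha_isHermitian (α : ℝ) (G : SimpleGraph V) : (Aalpha α G).IsHermitian := by
  classical
  exact ((isHermitian_diagonal _).smul (.all α)).add
    ((G.isHermitian_adjMatrix ℝ).smul (.all (1 - α)))

lemma Aalpha_mulVec_apply [DecidableEq V] (α : ℝ) (G : SimpleGraph V) [DecidableRel G.Adj]
    (x : V → ℝ) (v : V) :
    (Aalpha α G *ᵥ x) v = α * G.degree v * x v + (1 - α) * ∑ u ∈ G.neighborFinset v, x u := by
  unfold Aalpha
  convert_to ((α • diagonal (fun v => (G.degree v : ℝ)) + (1 - α) • G.adjMatrix ℝ) *ᵥ x) v = _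
  · congr!
  simp [add_mulVec, smul_mulVec, mulVec_diagonal, SimpleGraph.adjMatrix_mulVec_apply, mul_assoc]

end Aalpha

section CliqueJoin
variable {s t : ℕ} {parts : Fin t → ℕ}

lemma sum_comp_cellOf (F : Option (Fin t) → ℝ) :
    ∑ v : Fin s ⊕ (Σ i : Fin t, Fin (parts i)), F (cellOf v)
      = s * F none + ∑ i, parts i * F (some i) := by
  simp [Fintype.sum_sum_type, Fintype.sum_sigma, cellOf]

lemma dotProduct_comp_cellOf (F G : Option (Fin t) → ℝ) :
    (F ∘ cellOf : Fin s ⊕ (Σ i : Fin t, Fin (parts i)) → ℝ) ⬝ᵥ (G ∘ cellOf)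
      = s * (F none * G none) + ∑ i, parts i * (F (some i) * G (some i)) :=
  sum_comp_cellOf fun o => F o * G o

lemma neighborFinset_cliqueJoin [DecidableRel (cliqueJoin s parts).Adj]
    (v : Fin s ⊕ (Σ i : Fin t, Fin (parts i))) :
    (cliqueJoin s parts).neighborFinset v = ({u | cellOf v = none ∨ cellOf u = none ∨
      cellOf v = cellOf u} : Finset _).erase v := by
  ext u
  simp only [SimpleGraph.mem_neighborFinset, Finset.mem_erase, Finset.mem_filter,
    Finset.mem_univ, true_and]
  exact and_congr_left' ne_comm

def closedNbhdSum (s : ℕ) (parts : Fin t → ℕ) (F : Option (Fin t) → ℝ) : Option (Fin t) → ℝ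
  | none => s * F none + ∑ i, parts i * F (some i)
  | some i => s * F none + parts i * F (some i)

lemma sum_neighborFinset_comp_cellOf [DecidableRel (cliqueJoin s parts).Adj]
    (F : Option (Fin t) → ℝ) (v : Fin s ⊕ (Σ i : Fin t, Fin (parts i))) :
    ∑ u ∈ (cliqueJoin s parts).neighborFinset v, F (cellOf u)
      = closedNbhdSum s parts F (cellOf v) - F (cellOf v) := by
  rw [neighborFinset_cliqueJoin, Finset.sum_erase_eq_sub (by simp), Finset.sum_filter,
    sum_comp_cellOf (fun o => if cellOf v = none ∨ o = none ∨ cellOf v = o then F o else 0)]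
  rcases v with a | ⟨i, j⟩ <;> simp [cellOf, closedNbhdSum]

lemma degree_cliqueJoin [DecidableRel (cliqueJoin s parts).Adj]
    (v : Fin s ⊕ (Σ i : Fin t, Fin (parts i))) :
    ((cliqueJoin s parts).degree v : ℝ) = closedNbhdSum s parts 1 (cellOf v) - 1 := by
  rw [← SimpleGraph.card_neighborFinset_eq_degree, Finset.card_eq_sum_ones, Nat.cast_sum]
  simpa using sum_neighborFinset_comp_cellOf 1 v

/-- The quotient matrix of `A_α (cliqueJoin s parts)` for the equitable partition into cells,
applied to `F`. -/
def cellMulVec (s : ℕ) (parts : Fin t → ℕ) (α : ℝ) (F : Option (Fin t) → ℝ)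
    (o : Option (Fin t)) : ℝ :=
  α * (closedNbhdSum s parts 1 o - 1) * F o + (1 - α) * (closedNbhdSum s parts F o - F o)

lemma Aalpha_cliqueJoin_mulVec_comp_cellOf (α : ℝ) (F : Option (Fin t) → ℝ) :
    Aalpha α (cliqueJoin s parts) *ᵥ (F ∘ cellOf) = cellMulVec s parts α F ∘ cellOf := by
  classical
  ext v
  rw [Aalpha_mulVec_apply, degree_cliqueJoin, Function.comp_apply, Function.comp_apply]
  unfold cellMulVec
  rw [← sum_neighborFinset_comp_cellOf]
  rfl

end CliqueJoin

theorem rhoAlpha_extremalGraph_gt (α : ℝ) (hα0 : 0 ≤ α) (hα1 : α < 1)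
    (δ n : ℕ) (hδ : 2 ≤ δ) (hn : 2 * δ ≤ n) :
    (n : ℝ) - (δ : ℝ) < rhoAlpha α (cliqueJoin δ (fun i : Fin δ => if (i : ℕ) = 0 then n - 2 * δ + 1 else 1)) := by
  obtain ⟨k, rfl⟩ : ∃ k, δ = k + 2 := ⟨δ - 2, by omega⟩
  have hM : (0 : ℝ) < n - (k + 2) := by
    have : (2 * (k + 2) : ℝ) ≤ n := by exact_mod_cast hn
    linarith
  obtain ⟨ε, hε, hMε⟩ : ∃ ε > 0, (n - (k + 2) : ℝ) * ε = (k + 2) * (1 - α) :=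
    ⟨_, div_pos (by nlinarith) hM, mul_div_cancel₀ _ hM.ne'⟩
  apply lt_specRad_of_mul_dotProduct_lt (Aalpha_isHermitian α _)
    (x := Option.elim' 1 (fun i : Fin (k + 2) => if (i : ℕ) = 0 then 1 else ε) ∘ cellOf)
  rw [Aalpha_cliqueJoin_mulVec_comp_cellOf, dotProduct_comp_cellOf, dotProduct_comp_cellOf]
  simp only [cellMulVec, closedNbhdSum, Fin.sum_univ_succ, Fin.val_zero, Fin.val_succ,
    Option.elim'_none, Option.elim'_some, Pi.one_apply, Nat.cast_ite, Nat.cast_sub hn,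
    Nat.cast_add, Nat.cast_mul, Nat.cast_one, Nat.cast_ofNat, Finset.sum_const, Finset.card_univ,
    Fintype.card_fin, nsmul_eq_mul, ↓reduceIte, Nat.add_one_ne_zero]
  have hgap : 0 < (k + 2) * (k + 1) * (α + (1 - α) * ε + α * ε * ε) := by
    have : 0 < (1 - α) * ε := mul_pos (by linarith) hε
    positivity
  linear_combination hgap + (k + 1) * ε * hMε
end
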